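/- arXiv:1506.07158 — 2 statements merged into one kernel-verified Lean document; each statement's English description precedes it below -/
import Mathlib

section
/- Let S, Y₁, …, Y_K be independent nonnegative random variables with S ~ Gamma(m₀, β₀) for integer m₀ ≥ 1 and β₀ > 0. Then P[S > σ² + Σ_{i=1}^K Y_i] = e^{−β₀σ²} Σ_{ℓ=0}^{m₀−1} ((β₀σ²)^ℓ/ℓ!) Σ_{t=0}^{ℓ} C(ℓ,t) (t!/σ^{2t}) Σ_{(t₁,…,t_K): Σt_i = t} ∏_{i=1}^K E[(Y_i^{t_i}/t_i!) e^{−β₀ Y_i}]. -/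
open Real MeasureTheory ProbabilityTheory

/-!
With `W = ∑ Yᵢ` and `T = σ² + W` independent of `S`, the coverage probability is `E[F̄(T)]`, where
`F̄(x) = e^{-β₀x} ∑_{ℓ<m₀} (β₀x)^ℓ/ℓ!` is the survival function of the Erlang law of `S`.
Expanding `(β₀(σ² + W))^ℓ` binomially and then `W^t/t!` multinomially writes `F̄(T)` as a finite
combination of products `∏ᵢ Yᵢ^{tᵢ}/tᵢ! · e^{-β₀Yᵢ}`. Each factor is bounded by `β₀^{-tᵢ}`, so all
terms are integrable, and independence of the `Yᵢ` factors their expectations.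
-/

open Finset Filter Topology Set Nat

noncomputable def erlangSurvival (β : ℝ) (m : ℕ) (x : ℝ) : ℝ :=
  exp (-β * x) * ∑ ℓ ∈ range m, (β * x) ^ ℓ / ℓ !

lemma erlangSurvival_nonneg {β x : ℝ} (hβ : 0 ≤ β) (hx : 0 ≤ x) (m : ℕ) :
    0 ≤ erlangSurvival β m x := by
  unfold erlangSurvival
  positivity

lemma hasDerivAt_sum_range_pow_div_factorial (n : ℕ) (x : ℝ) :
    HasDerivAt (fun x : ℝ => ∑ ℓ ∈ range (n + 1), x ^ ℓ / ℓ !) (∑ ℓ ∈ range n, x ^ ℓ / ℓ !) x := by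
  refine (HasDerivAt.fun_sum (u := range (n + 1)) fun ℓ _ =>
    (hasDerivAt_pow ℓ x).div_const (ℓ ! : ℝ)).congr_deriv ?_
  rw [sum_range_succ', Nat.cast_zero, zero_mul, zero_div, add_zero]
  refine sum_congr rfl fun ℓ _ => ?_
  rw [Nat.factorial_succ, Nat.cast_mul, Nat.add_sub_cancel]
  field_simp

lemma hasDerivAt_erlangSurvival (β : ℝ) (n : ℕ) (x : ℝ) :
    HasDerivAt (erlangSurvival β (n + 1)) (-(β ^ (n + 1) * x ^ n * exp (-β * x) / n !)) x := by
  have hexp : HasDerivAt (fun x => exp (-β * x)) (exp (-β * x) * -β) x := by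
    simpa using ((hasDerivAt_id x).const_mul (-β)).exp
  have hsum := (hasDerivAt_sum_range_pow_div_factorial n (β * x)).comp x
    (by simpa using (hasDerivAt_id x).const_mul β)
  refine (hexp.mul hsum).congr_deriv ?_
  rw [Function.comp_apply, sum_range_succ, mul_pow]
  ring

lemma tendsto_erlangSurvival_atTop {β : ℝ} (hβ : 0 < β) (m : ℕ) :
    Tendsto (erlangSurvival β m) atTop (𝓝 0) := by
  have hβx : Tendsto (fun x => β * x) atTop atTop := tendsto_id.const_mul_atTop hβ
  have h : ∀ ℓ ∈ range m, Tendsto (fun x => (β * x) ^ ℓ * exp (-(β * x)) / ℓ !) atTop (𝓝 0) :=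
    fun ℓ _ => by simpa using ((tendsto_pow_mul_exp_neg_atTop_nhds_zero ℓ).comp hβx).div_const _
  convert tendsto_finsetSum _ h using 1
  · ext x
    simp only [erlangSurvival, mul_sum, neg_mul]
    exact sum_congr rfl fun ℓ _ => by ring
  · simp

lemma integrableOn_erlangPDF_Ioi {β : ℝ} (hβ : 0 < β) (n : ℕ) {x : ℝ} (hx : 0 ≤ x) :
    IntegrableOn (fun s => β ^ (n + 1) * s ^ n * exp (-β * s) / n !) (Ioi x) := by
  have h := integrableOn_rpow_mul_exp_neg_mul_rpow (s := n) (p := 1)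
    (neg_one_lt_zero.trans_le n.cast_nonneg) zero_lt_one hβ
  refine IntegrableOn.congr_fun ((h.mono_set (Ioi_subset_Ioi hx)).const_mul (β ^ (n + 1) / n !))
    (fun s _ => ?_) measurableSet_Ioi
  simp only [rpow_natCast, rpow_one]
  ring

lemma integral_Ioi_erlangPDF {β : ℝ} (hβ : 0 < β) (n : ℕ) {x : ℝ} (hx : 0 ≤ x) :
    ∫ s in Ioi x, β ^ (n + 1) * s ^ n * exp (-β * s) / n ! = erlangSurvival β (n + 1) x := by
  have := integral_Ioi_of_hasDerivAt_of_tendsto' (fun s _ => hasDerivAt_erlangSurvival β n s)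
    (integrableOn_erlangPDF_Ioi hβ n hx).neg (tendsto_erlangSurvival_atTop hβ _)
  rwa [integral_neg, zero_sub, neg_inj] at this

lemma withDensity_erlangPDF_Ioi {β : ℝ} (hβ : 0 < β) {m : ℕ} (hm : 1 ≤ m) {x : ℝ} (hx : 0 ≤ x) :
    volume.withDensity (fun s => ENNReal.ofReal
      (if 0 ≤ s then β ^ m * s ^ (m - 1) * exp (-β * s) / (m - 1)! else 0)) (Ioi x) =
      ENNReal.ofReal (erlangSurvival β m x) := by
  obtain ⟨n, rfl⟩ := Nat.exists_eq_add_of_le' hm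
  have hpos : ∀ s ∈ Ioi x, 0 ≤ s := fun s hs => hx.trans (le_of_lt (mem_Ioi.1 hs))
  rw [withDensity_apply _ measurableSet_Ioi, Nat.add_sub_cancel,
    setLIntegral_congr_fun measurableSet_Ioi fun s hs => by rw [if_pos (hpos s hs)],
    ← integral_Ioi_erlangPDF hβ n hx, ofReal_integral_eq_lintegral_ofReal]
  · exact integrableOn_erlangPDF_Ioi hβ n hx
  · exact (ae_restrict_iff' measurableSet_Ioi).2 (ae_of_all _ fun s hs => by
      have := hpos s hs
      positivity)

lemma Finset.sum_pow_div_factorial_eq_sum_piAntidiag {ι R : Type*} [DecidableEq ι] [Field R]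
    [CharZero R] (s : Finset ι) (y : ι → R) (t : ℕ) :
    (∑ i ∈ s, y i) ^ t / t ! = ∑ k ∈ piAntidiag s t, ∏ i ∈ s, y i ^ k i / (k i)! := by
  rw [sum_pow_eq_sum_piAntidiag, sum_div]
  refine sum_congr rfl fun k hk => ?_
  rw [mem_piAntidiag] at hk
  have hfact : (t ! : R) = multinomial s k * ∏ i ∈ s, ((k i)! : R) := by
    rw [← hk.1, ← Nat.cast_prod, ← Nat.cast_mul, mul_comm, Nat.multinomial_spec]
  rw [hfact, prod_div_distrib, mul_div_mul_left _ _ (Nat.cast_ne_zero.2 (multinomial_pos s k).ne')]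

lemma add_pow_eq_mul_sum_choose {σ : ℝ} (hσ : σ ≠ 0) (w : ℝ) (ℓ : ℕ) :
    (σ + w) ^ ℓ = σ ^ ℓ * ∑ t ∈ range (ℓ + 1), ℓ.choose t * (t ! / σ ^ t) * (w ^ t / t !) := by
  rw [add_comm, add_pow, mul_sum]
  refine sum_congr rfl fun t ht => ?_
  rw [pow_sub₀ _ hσ (Nat.lt_succ_iff.1 (mem_range.1 ht))]
  field_simp

lemma sum_pow_div_factorial_mul_exp_eq_sum_piAntidiag {ι : Type*} [DecidableEq ι]
    (s : Finset ι) (β : ℝ) (y : ι → ℝ) (t : ℕ) :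
    (∑ i ∈ s, y i) ^ t / t ! * exp (-β * ∑ i ∈ s, y i) =
      ∑ k ∈ piAntidiag s t, ∏ i ∈ s, (y i ^ k i / (k i)! * exp (-β * y i)) := by
  simp only [sum_pow_div_factorial_eq_sum_piAntidiag, Finset.mul_sum, exp_sum, Finset.sum_mul,
    prod_mul_distrib]

lemma erlangSurvival_add {β σ : ℝ} (hσ : σ ≠ 0) (m : ℕ) (w : ℝ) :
    erlangSurvival β m (σ + w) = exp (-β * σ) * ∑ ℓ ∈ range m, (β * σ) ^ ℓ / ℓ ! *
      ∑ t ∈ range (ℓ + 1), ℓ.choose t * (t ! / σ ^ t) * (w ^ t / t ! * exp (-β * w)) := by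
  simp only [erlangSurvival, mul_pow, add_pow_eq_mul_sum_choose hσ]
  simp only [mul_add, exp_add, Finset.mul_sum, Finset.sum_div]
  refine Finset.sum_congr rfl fun ℓ _ => Finset.sum_congr rfl fun t _ => ?_
  ring

lemma erlangSurvival_add_sum {β σ : ℝ} (hσ : σ ≠ 0) (m K : ℕ) (y : Fin K → ℝ) :
    erlangSurvival β m (σ + ∑ i, y i) = exp (-β * σ) * ∑ ℓ ∈ range m, (β * σ) ^ ℓ / ℓ ! *
      ∑ t ∈ range (ℓ + 1), ℓ.choose t * (t ! / σ ^ t) *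
        ∑ k ∈ Nat.antidiagonalTuple K t, ∏ i, (y i ^ k i / (k i)! * exp (-β * y i)) := by
  simp only [erlangSurvival_add hσ, sum_pow_div_factorial_mul_exp_eq_sum_piAntidiag,
    piAntidiag_univ_fin_eq_antidiagonalTuple]

lemma pow_div_factorial_mul_exp_neg_le {β y : ℝ} (hβ : 0 < β) (hy : 0 ≤ y) (k : ℕ) :
    y ^ k / k ! * exp (-β * y) ≤ (β ^ k)⁻¹ := by
  have h := pow_div_factorial_le_exp (x := β * y) (mul_nonneg hβ.le hy) k
  rw [← div_le_one (exp_pos _), div_eq_mul_inv, ← exp_neg, mul_pow] at h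
  rw [← one_div, le_div_iff₀' (pow_pos hβ k), neg_mul]
  calc _ = β ^ k * y ^ k / k ! * exp (-(β * y)) := by ring
    _ ≤ 1 := h

lemma integrable_prod_pow_div_factorial_mul_exp_neg {Ω ι : Type*} [MeasurableSpace Ω]
    {μ : Measure Ω} [IsFiniteMeasure μ] [Fintype ι] {β : ℝ} (hβ : 0 < β) {Y : ι → Ω → ℝ}
    (hY : ∀ i, Measurable (Y i)) (hY0 : ∀ i ω, 0 ≤ Y i ω) (k : ι → ℕ) :
    Integrable (fun ω => ∏ i, (Y i ω ^ k i / (k i)! * exp (-β * Y i ω))) μ := by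
  refine .of_bound (by fun_prop) (∏ i, (β ^ k i)⁻¹) (ae_of_all _ fun ω => ?_)
  rw [norm_prod]
  refine prod_le_prod (fun i _ => norm_nonneg _) fun i _ => ?_
  rw [Real.norm_of_nonneg (by have := hY0 i ω; positivity)]
  exact pow_div_factorial_mul_exp_neg_le hβ (hY0 i ω) _

namespace ProbabilityTheory

variable {Ω : Type*} [MeasurableSpace Ω] {μ : Measure Ω}

lemma measure_lt_eq_lintegral_map_Ioi [IsFiniteMeasure μ] {T S : Ω → ℝ}
    (hT : AEMeasurable T μ) (hS : AEMeasurable S μ) (hTS : IndepFun T S μ) :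
    μ {ω | T ω < S ω} = ∫⁻ ω, μ.map S (Ioi (T ω)) ∂μ := by
  have hlt : MeasurableSet {p : ℝ × ℝ | p.1 < p.2} := measurableSet_lt measurable_fst measurable_snd
  calc μ {ω | T ω < S ω} = μ.map (fun ω => (T ω, S ω)) {p | p.1 < p.2} :=
        (Measure.map_apply_of_aemeasurable (hT.prodMk hS) hlt).symm
    _ = ∫⁻ x, μ.map S (Ioi x) ∂(μ.map T) := by
        rw [(indepFun_iff_map_prod_eq_prod_map_map hT hS).1 hTS, Measure.prod_apply hlt]
        rfl
    _ = ∫⁻ ω, μ.map S (Ioi (T ω)) ∂μ :=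
        lintegral_map' (measurable_measure_prodMk_left hlt).aemeasurable hT

variable {K : ℕ} {S : Ω → ℝ} {Y : Fin K → Ω → ℝ}

lemma iIndepFun.of_cons (h : iIndepFun (Fin.cons S Y : Fin (K + 1) → Ω → ℝ) μ) :
    iIndepFun Y μ :=
  h.precomp (g := Fin.succ) (Fin.succ_injective K)

lemma iIndepFun.indepFun_sum_of_cons (hS : Measurable S) (hY : ∀ i, Measurable (Y i))
    (h : iIndepFun (Fin.cons S Y : Fin (K + 1) → Ω → ℝ) μ) :
    IndepFun (fun ω => ∑ i, Y i ω) S μ := by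
  have := h.indepFun_finsetSum_of_notMem (fun i => Fin.cases hS hY i)
    (s := univ.map (Fin.succEmb K)) (i := 0) (by simp)
  simpa [Finset.sum_map, Finset.sum_fn] using this

end ProbabilityTheory

theorem coverage_probability_product_form_general
    {Ω : Type*} [MeasurableSpace Ω] (μ : Measure Ω) [IsProbabilityMeasure μ]
    (K m₀ : ℕ) (hm : 1 ≤ m₀) (β₀ σ2 : ℝ) (hβ : 0 < β₀) (hσ : 0 < σ2)
    (S : Ω → ℝ) (Y : Fin K → Ω → ℝ)
    (hmeasS : Measurable S) (hmeasY : ∀ i, Measurable (Y i))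
    (hindep : iIndepFun (Fin.cons S Y : Fin (K + 1) → Ω → ℝ) μ)
    (hSpdf : Measure.map S μ = volume.withDensity (fun s => ENNReal.ofReal
      (if 0 ≤ s then β₀ ^ m₀ * s ^ (m₀ - 1) * Real.exp (-β₀ * s) / (Nat.factorial (m₀ - 1))
       else 0)))
    (hYnonneg : ∀ i ω, 0 ≤ Y i ω) :
    (μ {ω | σ2 + ∑ i, Y i ω < S ω}).toReal =
      Real.exp (-β₀ * σ2) * ∑ ℓ ∈ Finset.range m₀, (β₀ * σ2) ^ ℓ / (Nat.factorial ℓ) *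
        ∑ t ∈ Finset.range (ℓ + 1), (ℓ.choose t : ℝ) * ((Nat.factorial t : ℝ) / σ2 ^ t) *
          ∑ ts ∈ Finset.Nat.antidiagonalTuple K t,
            ∏ i, ∫ ω, ((Y i ω) ^ ts i / (Nat.factorial (ts i) : ℝ)) *
              Real.exp (-β₀ * Y i ω) ∂μ := by
  set T : Ω → ℝ := fun ω => σ2 + ∑ i, Y i ω
  have hT : IndepFun T S μ :=
    (hindep.indepFun_sum_of_cons hmeasS hmeasY).comp (measurable_const_add σ2) measurable_id
  have hT0 : ∀ ω, 0 ≤ T ω := fun ω => add_nonneg hσ.le (sum_nonneg fun i _ => hYnonneg i ω)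
  have hprob : (μ {ω | T ω < S ω}).toReal = ∫ ω, erlangSurvival β₀ m₀ (T ω) ∂μ := by
    rw [measure_lt_eq_lintegral_map_Ioi (by fun_prop) hmeasS.aemeasurable hT, hSpdf,
      lintegral_congr fun ω => withDensity_erlangPDF_Ioi hβ hm (hT0 ω),
      integral_eq_lintegral_of_nonneg_ae
        (ae_of_all _ fun ω => erlangSurvival_nonneg hβ.le (hT0 ω) m₀)
        (by unfold erlangSurvival; fun_prop)]
  have hint : ∀ k : Fin K → ℕ,
      Integrable (fun ω => ∏ i, (Y i ω ^ k i / (k i)! * exp (-β₀ * Y i ω))) μ :=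
    integrable_prod_pow_div_factorial_mul_exp_neg hβ hmeasY hYnonneg
  rw [hprob]
  simp only [T, erlangSurvival_add_sum hσ.ne']
  rw [integral_const_mul, integral_finsetSum _ (by fun_prop)]
  refine congrArg _ (Finset.sum_congr rfl fun ℓ _ => ?_)
  rw [integral_const_mul, integral_finsetSum _ (by fun_prop)]
  refine congrArg _ (Finset.sum_congr rfl fun t _ => ?_)
  rw [integral_const_mul, integral_finsetSum _ (by fun_prop)]
  refine congrArg _ (Finset.sum_congr rfl fun k _ => ?_)
  exact hindep.of_cons.integral_fun_prod_comp (f := fun i y => y ^ k i / (k i)! * exp (-β₀ * y))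
    (fun i => (hmeasY i).aemeasurable) fun i => by fun_prop

/-- coverage probability of a Gamma-distributed signal over noise plus a sum of
independent nonnegative interference terms, in product form. -/
theorem coverage_probability_product_form
    {Ω : Type*} [MeasurableSpace Ω] (μ : Measure Ω) [IsProbabilityMeasure μ]
    (K m₀ : ℕ) (hm : 1 ≤ m₀) (β₀ σ2 : ℝ) (hβ : 0 < β₀) (hσ : 0 < σ2)
    (S : Ω → ℝ) (Y : Fin K → Ω → ℝ)
    (hmeasS : Measurable S) (hmeasY : ∀ i, Measurable (Y i))
    (hindep : iIndepFun (Fin.cons S Y : Fin (K + 1) → Ω → ℝ) μ)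
    (hSpdf : Measure.map S μ = volume.withDensity (fun s => ENNReal.ofReal
      (if 0 ≤ s then β₀ ^ m₀ * s ^ (m₀ - 1) * Real.exp (-β₀ * s) / (Nat.factorial (m₀ - 1))
       else 0)))
    (hYnonneg : ∀ i ω, 0 ≤ Y i ω)
    (hYmom : ∀ i (n : ℕ), Integrable (fun ω => (Y i ω) ^ n) μ) :
    (μ {ω | σ2 + ∑ i, Y i ω < S ω}).toReal =
      Real.exp (-β₀ * σ2) * ∑ ℓ ∈ Finset.range m₀, (β₀ * σ2) ^ ℓ / (Nat.factorial ℓ) *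
        ∑ t ∈ Finset.range (ℓ + 1), (ℓ.choose t : ℝ) * ((Nat.factorial t : ℝ) / σ2 ^ t) *
          ∑ ts ∈ Finset.Nat.antidiagonalTuple K t,
            ∏ i, ∫ ω, ((Y i ω) ^ ts i / (Nat.factorial (ts i) : ℝ)) *
              Real.exp (-β₀ * Y i ω) ∂μ :=
  coverage_probability_product_form_general μ K m₀ hm β₀ σ2 hβ hσ S Y hmeasS hmeasY hindep hSpdf
    hYnonneg
end

section
/- Consider points uniformly distributed on the annulus A with radii r_in < r_out, and a transmitter at distance r from the origin with r_in ≤ r ≤ r_out − W/2. The blocking region (the set of centers B such that a disk of diameter W centered at B intersects the open segment from the origin-point's receiver to the transmitter, restricted to A and excluding the inner disk of radius r_in) has area rW + πW²/8 − μ, where μ = (W/2)√(r_in² − (W/2)²) + r_in² arcsin(W/(2 r_in)). -/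
open Real MeasureTheory Set

/-!
Slice the region by horizontal lines. For `|y| ≤ W/2` the slice at height `y` is the interval
`(√(r_in² - y²), r + √((W/2)² - y²)]`: its left end lies on the inner circle, its right end on
the rectangle or on the cap. For `|y| > W/2` it is empty. By Cavalieri the area is the integral
of the slice length over `[-W/2, W/2]`, and both square-root integrals are evaluated with the
antiderivative `t √(R² - t²) / 2 + R² arcsin (t / R) / 2` of `√(R² - t²)`: the cap gives
`π W² / 8` and the lens gives `μ`.
-/

theorem hasDerivAt_antideriv_sqrt_sq_sub_sq {R y : ℝ} (hR : 0 < R) (hy : y ∈ Ioo (-R) R) :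
    HasDerivAt (fun t => t / 2 * √(R ^ 2 - t ^ 2) + R ^ 2 / 2 * arcsin (t / R))
      √(R ^ 2 - y ^ 2) y := by
  obtain ⟨hy₁, hy₂⟩ := hy
  have hpos : 0 < R ^ 2 - y ^ 2 := by nlinarith
  have hy₁' : y / R ≠ -1 := by rw [Ne, div_eq_iff hR.ne']; linarith
  have hy₂' : y / R ≠ 1 := by rw [Ne, div_eq_iff hR.ne']; linarith
  have hsqrt :
      HasDerivAt (fun t => √(R ^ 2 - t ^ 2)) (-(2 * y) / (2 * √(R ^ 2 - y ^ 2))) y := by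
    simpa using ((hasDerivAt_pow 2 y).const_sub (R ^ 2)).sqrt hpos.ne'
  have harcsin : HasDerivAt (fun t => arcsin (t / R)) (1 / √(1 - (y / R) ^ 2) * (1 / R)) y := by
    simpa [Function.comp_def] using
      (hasDerivAt_arcsin hy₁' hy₂').comp y ((hasDerivAt_id y).div_const R)
  have hscale : √(1 - (y / R) ^ 2) = √(R ^ 2 - y ^ 2) / R := by
    rw [show 1 - (y / R) ^ 2 = (R ^ 2 - y ^ 2) / R ^ 2 by field_simp, sqrt_div hpos.le,
      sqrt_sq hR.le]
  refine ((((hasDerivAt_id y).div_const 2).mul hsqrt).add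
    (harcsin.const_mul (R ^ 2 / 2))).congr_deriv ?_
  rw [hscale]
  field_simp
  rw [sq_sqrt hpos.le, id]
  ring

theorem integral_sqrt_sq_sub_sq {R b : ℝ} (hR : 0 < R) (hb : 0 ≤ b) (hbR : b ≤ R) :
    ∫ y in -b..b, √(R ^ 2 - y ^ 2) = b * √(R ^ 2 - b ^ 2) + R ^ 2 * arcsin (b / R) := by
  have hcont : Continuous fun t : ℝ => √(R ^ 2 - t ^ 2) := by fun_prop
  rw [intervalIntegral.integral_eq_sub_of_hasDerivAt_of_le (neg_le_self hb) (by fun_prop)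
    (fun y hy => hasDerivAt_antideriv_sqrt_sq_sub_sq hR
      (Ioo_subset_Ioo (neg_le_neg hbR) hbR hy)) (hcont.intervalIntegrable _ _)]
  simp only [neg_sq, neg_div, arcsin_neg]
  ring

theorem volume_region_between_oc_eq_integral {α : Type*} [MeasurableSpace α] {μ : Measure α}
    [SigmaFinite μ] {f g : α → ℝ} {s : Set α} (hf : Measurable f) (hg : Measurable g)
    (f_int : IntegrableOn f s μ) (g_int : IntegrableOn g s μ) (hs : MeasurableSet s)
    (hfg : ∀ x ∈ s, f x ≤ g x) :
    μ.prod volume {p : α × ℝ | p.1 ∈ s ∧ p.2 ∈ Ioc (f p.1) (g p.1)} =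
      ENNReal.ofReal (∫ y in s, (g - f) y ∂μ) := by
  rw [← volume_regionBetween_eq_integral f_int g_int hs hfg,
    Measure.prod_apply (measurableSet_region_between_oc hf hg hs),
    Measure.prod_apply (measurableSet_regionBetween hf hg hs)]
  refine lintegral_congr fun x => ?_
  by_cases hx : x ∈ s
  · simp only [regionBetween, hx, true_and, preimage_ofPred_eq]
    exact Real.volume_Ioc.trans Real.volume_Ioo.symm
  · simp [regionBetween, hx]

theorem blocking_set_eq_swap_preimage_region_between {rin a r : ℝ} (ha : 0 ≤ a) (harin : a ≤ rin)
    (hr : 0 ≤ r) :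
    ({p : ℝ × ℝ | 0 ≤ p.1 ∧ p.1 ≤ r ∧ |p.2| ≤ a} ∪
        {p : ℝ × ℝ | (p.1 - r) ^ 2 + p.2 ^ 2 ≤ a ^ 2 ∧ r ≤ p.1}) \
        {p : ℝ × ℝ | p.1 ^ 2 + p.2 ^ 2 ≤ rin ^ 2} =
      Prod.swap ⁻¹' {p : ℝ × ℝ | p.1 ∈ Icc (-a) a ∧
        p.2 ∈ Ioc √(rin ^ 2 - p.1 ^ 2) (r + √(a ^ 2 - p.1 ^ 2))} := by
  ext ⟨x, y⟩
  simp only [mem_sdiff, mem_union, mem_ofPred_eq, mem_preimage, Prod.swap_prod_mk, mem_Icc,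
    mem_Ioc, not_le, ← abs_le]
  constructor
  · rintro ⟨hmem, hout⟩
    have hy : |y| ≤ a := by
      rcases hmem with ⟨-, -, hy⟩ | ⟨hcap, -⟩
      · exact hy
      · exact abs_le_of_sq_le_sq (by nlinarith [sq_nonneg (x - r)]) ha
    have hy2 : y ^ 2 ≤ a ^ 2 := sq_le_sq' (abs_le.1 hy).1 (abs_le.1 hy).2
    have hx : 0 ≤ x := by rcases hmem with ⟨hx, -⟩ | ⟨-, hrx⟩ <;> linarith
    refine ⟨hy, (sqrt_lt (by nlinarith) hx).2 (by linarith), ?_⟩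
    rcases hmem with ⟨-, hxr, -⟩ | ⟨hcap, hrx⟩
    · linarith [sqrt_nonneg (a ^ 2 - y ^ 2)]
    · linarith [(le_sqrt (y := a ^ 2 - y ^ 2) (sub_nonneg.2 hrx) (by linarith)).2 (by linarith)]
  · rintro ⟨hy, hlo, hhi⟩
    have hy2 : y ^ 2 ≤ a ^ 2 := sq_le_sq' (abs_le.1 hy).1 (abs_le.1 hy).2
    have hx : 0 < x := (sqrt_nonneg _).trans_lt hlo
    refine ⟨?_, by linarith [(sqrt_lt' hx).1 hlo]⟩
    rcases le_or_gt x r with hxr | hrx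
    · exact Or.inl ⟨hx.le, hxr, hy⟩
    · refine Or.inr ⟨?_, hrx.le⟩
      linarith [(le_sqrt (y := a ^ 2 - y ^ 2) (sub_nonneg.2 hrx.le) (by linarith)).1 (by linarith)]

theorem blocking_region_area_general (rin W r : ℝ)
    (h0 : 0 < rin) (hW : 0 < W) (hW2 : W < 2 * rin)
    (hr : rin ≤ r) :
    volume ((({p : ℝ × ℝ | 0 ≤ p.1 ∧ p.1 ≤ r ∧ |p.2| ≤ W / 2} ∪
        {p : ℝ × ℝ | (p.1 - r) ^ 2 + p.2 ^ 2 ≤ (W / 2) ^ 2 ∧ r ≤ p.1}) \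
        {p : ℝ × ℝ | p.1 ^ 2 + p.2 ^ 2 ≤ rin ^ 2})) =
      ENNReal.ofReal (r * W + π * W ^ 2 / 8 -
        ((W / 2) * Real.sqrt (rin ^ 2 - (W / 2) ^ 2) +
          rin ^ 2 * Real.arcsin (W / (2 * rin)))) := by
  have ha : 0 < W / 2 := half_pos hW
  have harin : W / 2 ≤ rin := by linarith
  have hlower : Continuous fun y : ℝ => √(rin ^ 2 - y ^ 2) := by fun_prop
  have hcap : Continuous fun y : ℝ => √((W / 2) ^ 2 - y ^ 2) := by fun_prop
  have hupper : Continuous fun y : ℝ => r + √((W / 2) ^ 2 - y ^ 2) := continuous_const.add hcap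
  have hle (y : ℝ) : √(rin ^ 2 - y ^ 2) ≤ r + √((W / 2) ^ 2 - y ^ 2) := by
    have : √(rin ^ 2 - y ^ 2) ≤ rin := sqrt_le_iff.2 ⟨h0.le, by linarith [sq_nonneg y]⟩
    linarith [sqrt_nonneg ((W / 2) ^ 2 - y ^ 2)]
  rw [blocking_set_eq_swap_preimage_region_between ha.le harin (h0.le.trans hr),
    Measure.volume_eq_prod,
    Measure.measurePreserving_swap.measure_preimage
      (measurableSet_region_between_oc hlower.measurable hupper.measurable
        measurableSet_Icc).nullMeasurableSet,
    volume_region_between_oc_eq_integral hlower.measurable hupper.measurable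
      hlower.integrableOn_Icc hupper.integrableOn_Icc measurableSet_Icc fun y _ => hle y,
    integral_Icc_eq_integral_Ioc, ← intervalIntegral.integral_of_le (neg_le_self ha.le)]
  congr 1
  simp only [Pi.sub_apply]
  rw [intervalIntegral.integral_sub (hupper.intervalIntegrable _ _) (hlower.intervalIntegrable _ _),
    intervalIntegral.integral_add intervalIntegrable_const (hcap.intervalIntegrable _ _),
    intervalIntegral.integral_const, integral_sqrt_sq_sub_sq ha ha.le le_rfl,
    integral_sqrt_sq_sub_sq h0 ha.le harin, sub_self, sqrt_zero, div_self ha.ne', arcsin_one,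
    div_div, smul_eq_mul]
  ring

/-- area of the blocking region for a transmitter at distance `r` with
`r_in ≤ r ≤ r_out − W/2`: the rectangle `r × W` around the line-of-sight segment, plus the
half-disk cap of radius `W/2` at the transmitter, minus the lens-shaped overlap with the
central disk of radius `r_in`, has area `rW + πW²/8 − μ` with
`μ = (W/2)√(r_in² − (W/2)²) + r_in² arcsin(W/(2 r_in))`. -/
theorem blocking_region_area (rin rout W r : ℝ)
    (h0 : 0 < rin) (h1 : rin < rout) (hW : 0 < W) (hW2 : W < 2 * rin)
    (hr : rin ≤ r) (hr2 : r ≤ rout - W / 2) :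
    volume ((({p : ℝ × ℝ | 0 ≤ p.1 ∧ p.1 ≤ r ∧ |p.2| ≤ W / 2} ∪
        {p : ℝ × ℝ | (p.1 - r) ^ 2 + p.2 ^ 2 ≤ (W / 2) ^ 2 ∧ r ≤ p.1}) \
        {p : ℝ × ℝ | p.1 ^ 2 + p.2 ^ 2 ≤ rin ^ 2})) =
      ENNReal.ofReal (r * W + π * W ^ 2 / 8 -
        ((W / 2) * Real.sqrt (rin ^ 2 - (W / 2) ^ 2) +
          rin ^ 2 * Real.arcsin (W / (2 * rin)))) :=
  blocking_region_area_general rin W r h0 hW hW2 hr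
end
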